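/- arXiv:math/0208189 — 2 statements merged into one kernel-verified Lean document; each statement's English description precedes it below -/
import Mathlib

section
/- Every finitely generated free group is Hopfian, i.e., every surjective endomorphism of a finitely generated free group is injective. -/
/-!
Mal'cev: a finitely generated residually finite group `G` is Hopfian. If `φ` is onto and
`g ∈ ker φ` survives in a finite quotient `π : G → Q`, then precomposition with `φ` is an injective
self-map of the finite set `Hom(G, Q)`, hence onto, so `π = χ ∘ φ` for some `χ`, forcing
`π g = 1`.

Free groups are residually finite: for a reduced word `w = x₁ ⋯ xₖ`, send each generator `a` to a
permutation of `{0, …, k}` under which every letter `xᵢ = a^{±1}` moves `i` to `i - 1`.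
Reducedness makes these prescriptions for `a` a partial injection, which extends to a permutation,
and then `w` moves `k` to `0`.
-/

open Function Equiv

instance MonoidHom.finite_of_fg {G K : Type*} [Group G] [Group K] [Group.FG G] [Finite K] :
    Finite (G →* K) := by
  obtain ⟨S, hS, hSfin⟩ := Group.fg_iff.mp ‹Group.FG G›
  have := hSfin.to_subtype
  refine Finite.of_injective (fun f : G →* K => S.domRestrict f) fun f g hfg => ?_
  exact MonoidHom.eq_of_eqOn_dense hS fun x hx => congrFun hfg ⟨x, hx⟩

theorem Group.ResiduallyFinite.injective_of_surjective {G : Type*} [Group G] [Group.FG G]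
    [Group.ResiduallyFinite G] {φ : G →* G} (hφ : Surjective φ) : Injective φ := by
  refine (injective_iff_map_eq_one φ).mpr fun g hg => by_contra fun hg1 => ?_
  obtain ⟨H, hgH⟩ := Group.exists_finiteIndexNormalSubgroup_notMem g hg1
  have hcomp : Injective fun f : G →* G ⧸ H.toSubgroup => f.comp φ :=
    fun _ _ => (MonoidHom.cancel_right hφ).mp
  obtain ⟨χ, hχ⟩ := Finite.surjective_of_injective hcomp (QuotientGroup.mk' H.toSubgroup)
  have : (g : G ⧸ H.toSubgroup) = 1 := by
    rw [← QuotientGroup.mk'_apply, ← hχ, MonoidHom.comp_apply, hg, map_one]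
  exact hgH ((QuotientGroup.eq_one_iff g).mp this)

theorem List.prod_ofFn_smul_last {M β : Type*} [Monoid M] [MulAction M β] :
    ∀ {n : ℕ} (τ : Fin n → M) (p : Fin (n + 1) → β),
      (∀ i, τ i • p i.succ = p i.castSucc) → (List.ofFn τ).prod • p (Fin.last n) = p 0
  | 0, _, _, _ => by simp
  | n + 1, τ, p, hτ => by
    rw [List.ofFn_succ, List.prod_cons, mul_smul, ← Fin.succ_last,
      List.prod_ofFn_smul_last (fun i => τ i.succ) (fun i => p i.succ) fun i => hτ i.succ]
    exact hτ 0

namespace FreeGroup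

variable {α : Type*} {L : List (α × Bool)}

theorem IsReduced.snd_eq_of_val_eq_succ (hL : IsReduced L) {i j : Fin L.length}
    (hij : (j : ℕ) = i + 1) (hfst : L[i].1 = L[j].1) : L[i].2 = L[j].2 := by
  simp only [Fin.getElem_fin, hij] at hfst ⊢
  exact List.IsChain.getElem hL i (hij ▸ j.2) hfst

/-- With `c = false` these are the points that `σ a` must move in `IsReduced.exists_perm`, with
`c = true` their prescribed images. -/
theorem IsReduced.injective_cond_xor (hL : IsReduced L) (a : α) (c : Bool) :
    Injective fun i : {i : Fin L.length // L[i].1 = a} =>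
      cond (xor L[i.1].2 c) i.1.succ i.1.castSucc := by
  rintro ⟨i, hi⟩ ⟨j, hj⟩ hij
  dsimp only at hij
  rw [Subtype.mk.injEq]
  by_cases hsnd : L[i].2 = L[j].2
  · rw [hsnd] at hij
    revert hij
    cases xor L[j].2 c
    exacts [fun h => Fin.castSucc_injective _ h, fun h => Fin.succ_injective _ h]
  · have hadj : (j : ℕ) = i + 1 ∨ (i : ℕ) = j + 1 := by
      have := congrArg Fin.val hij
      revert this hsnd
      cases L[i].2 <;> cases L[j].2 <;> cases c <;> simp <;> omega
    rcases hadj with h | h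
    · exact absurd (hL.snd_eq_of_val_eq_succ h (hi.trans hj.symm)) hsnd
    · exact absurd (hL.snd_eq_of_val_eq_succ h (hj.trans hi.symm)).symm hsnd

theorem IsReduced.exists_perm (hL : IsReduced L) :
    ∃ σ : α → Perm (Fin (L.length + 1)), ∀ i : Fin L.length,
      cond L[(i : ℕ)].2 (σ L[(i : ℕ)].1) (σ L[(i : ℕ)].1)⁻¹ • i.succ = i.castSucc := by
  have key (a : α) : ∃ σ : Perm (Fin (L.length + 1)), ∀ i : {i : Fin L.length // L[i].1 = a},
      σ (cond (xor L[i.1].2 false) i.1.succ i.1.castSucc) =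
        cond (xor L[i.1].2 true) i.1.succ i.1.castSucc :=
    Perm.exists_extending_pair _ _ (hL.injective_cond_xor a false) (hL.injective_cond_xor a true)
  choose σ hσ using key
  refine ⟨σ, fun i => ?_⟩
  have hi := hσ _ ⟨i, rfl⟩
  cases h : L[(i : ℕ)].2 <;> simp only [Fin.getElem_fin, h] at hi ⊢
  · exact Perm.inv_eq_iff_eq.mpr hi.symm
  · exact hi

theorem exists_hom_perm_ne_one [DecidableEq α] {g : FreeGroup α} (hg : g ≠ 1) :
    ∃ ψ : FreeGroup α →* Perm (Fin (g.toWord.length + 1)), ψ g ≠ 1 := by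
  obtain ⟨σ, hσ⟩ := (isReduced_toWord (x := g)).exists_perm
  refine ⟨lift σ, fun h => ?_⟩
  have hlen : g.toWord.length ≠ 0 := by simpa [toWord_eq_nil_iff] using hg
  have hprod := List.prod_ofFn_smul_last _ id hσ
  rw [List.ofFn_getElem_eq_map g.toWord fun x => cond x.2 (σ x.1) (σ x.1)⁻¹, ← lift_mk, mk_toWord,
    h] at hprod
  exact hlen (congrArg Fin.val hprod)

instance residuallyFinite : Group.ResiduallyFinite (FreeGroup α) := by
  classical
  exact Group.residuallyFinite_of_forall_exists_finite_monoidHom fun g hg =>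
    let ⟨ψ, hψ⟩ := exists_hom_perm_ne_one hg
    ⟨_, _, inferInstance, ψ, hψ⟩

end FreeGroup

theorem free_group_hopfian (n : ℕ) (φ : FreeGroup (Fin n) →* FreeGroup (Fin n))
    (hsurj : Function.Surjective φ) : Function.Injective φ :=
  Group.ResiduallyFinite.injective_of_surjective hsurj
end

section
/- If φ : F → F is an endomorphism of a finitely generated free group with ker(φ^k) = ker(φ^{k+1}), then the induced injective endomorphism φ̄ of F/ker(φ^k) satisfies: M(φ) is an ascending HNN extension of a finitely generated free group, hence F/ker(φ^k) embeds in M(φ). -/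
open Monoid

/-- The mapping torus `M(φ) = ⟨G, t | t⁻¹ g t = φ(g)⟩` of an endomorphism `φ : G → G`. -/
def mappingTorus {G : Type*} [Group G] (φ : G →* G) : Type _ :=
  Coprod G (Multiplicative ℤ) ⧸ Subgroup.normalClosure
    {x | ∃ g : G, x = (Coprod.inr (Multiplicative.ofAdd (1 : ℤ)))⁻¹ * Coprod.inl g *
      Coprod.inr (Multiplicative.ofAdd (1 : ℤ)) * (Coprod.inl (φ g))⁻¹}

instance {G : Type*} [Group G] (φ : G →* G) : Group (mappingTorus φ) := by
  unfold mappingTorus; infer_instance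

/-- The canonical homomorphism `G → M(φ)`. -/
def mappingTorus.ofBase {G : Type*} [Group G] (φ : G →* G) : G →* mappingTorus φ :=
  (QuotientGroup.mk' _).comp Coprod.inl

/-- The stable letter `t ∈ M(φ)`. -/
def mappingTorus.t {G : Type*} [Group G] (φ : G →* G) : mappingTorus φ :=
  QuotientGroup.mk' _ (Coprod.inr (Multiplicative.ofAdd (1 : ℤ)))

/-!
Since `t⁻ⁿ g tⁿ = φⁿ(g)` in `M(φ)`, every element of `N = ker φᵏ` dies in `M(φ)`. Conversely, since
`φ̄` is injective, `M(φ)` maps to the ascending HNN extension of `F ⧸ N` along `φ̄`, into which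
`F ⧸ N` embeds by Britton's lemma; so `N` is exactly the kernel of `F → M(φ)`.
-/

namespace mappingTorus

variable {G : Type*} [Group G] (φ : G →* G)

theorem t_inv_mul_ofBase_mul_t (g : G) : (t φ)⁻¹ * ofBase φ g * t φ = ofBase φ (φ g) := by
  rw [← mul_inv_eq_one]
  exact (QuotientGroup.eq_one_iff ((Coprod.inr (Multiplicative.ofAdd (1 : ℤ)))⁻¹ * Coprod.inl g *
    Coprod.inr (Multiplicative.ofAdd (1 : ℤ)) * (Coprod.inl (φ g))⁻¹)).2
      (Subgroup.subset_normalClosure ⟨g, rfl⟩)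

theorem ofBase_iterate (n : ℕ) (g : G) :
    ofBase φ (φ^[n] g) = (t φ ^ n)⁻¹ * ofBase φ g * t φ ^ n := by
  induction n with
  | zero => simp
  | succ n ih =>
    rw [Function.iterate_succ_apply', ← t_inv_mul_ofBase_mul_t, ih, pow_succ]
    group

theorem ofBase_eq_one_of_iterate_eq_one {n : ℕ} {g : G} (h : φ^[n] g = 1) : ofBase φ g = 1 := by
  rw [← conj_eq_one_iff (a := (t φ ^ n)⁻¹), inv_inv, ← ofBase_iterate, h, map_one]

def lift {H : Type*} [Group H] (f : G →* H) (x : H) (hx : ∀ g, x⁻¹ * f g * x = f (φ g)) :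
    mappingTorus φ →* H :=
  QuotientGroup.lift _ (Coprod.lift f (zpowersHom H x)) <| Subgroup.normalClosure_le_normal <| by
    rintro _ ⟨g, rfl⟩
    simp [hx]

@[simp]
theorem lift_ofBase {H : Type*} [Group H] (f : G →* H) (x : H)
    (hx : ∀ g, x⁻¹ * f g * x = f (φ g)) (g : G) : lift φ f x hx (ofBase φ g) = f g :=
  rfl

/-- As `φ̄` is injective, `G ⧸ N` embeds in the ascending HNN extension of `G ⧸ N` along `φ̄`,
and `M(φ)` maps to that extension compatibly with `G → G ⧸ N`. -/
theorem ker_ofBase_le {N : Subgroup G} [N.Normal] (hN : N ≤ N.comap φ)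
    (hinj : Function.Injective (QuotientGroup.map N N φ hN)) : (ofBase φ).ker ≤ N := by
  let e : (⊤ : Subgroup (G ⧸ N)) ≃* (QuotientGroup.map N N φ hN).range :=
    Subgroup.topEquiv.trans (MonoidHom.ofInjective hinj)
  let F := lift φ ((HNNExtension.of (φ := e)).comp (QuotientGroup.mk' N)) HNNExtension.t⁻¹
    fun g => by
      rw [inv_inv]
      exact (HNNExtension.equiv_eq_conj ⟨(g : G ⧸ N), Subgroup.mem_top _⟩).symm
  intro g hg
  rw [← QuotientGroup.eq_one_iff]
  apply HNNExtension.of_injective (φ := e)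
  simpa [F] using congrArg F hg

end mappingTorus

theorem Monoid.End.injective_map_ker_pow {G : Type*} [Group G] {φ : Monoid.End G} {k : ℕ}
    (hstab : MonoidHom.ker (φ ^ k) = MonoidHom.ker (φ ^ (k + 1)))
    (h : MonoidHom.ker (φ ^ k) ≤ (MonoidHom.ker (φ ^ k)).comap (φ : G →* G)) :
    Function.Injective (QuotientGroup.map _ _ (φ : G →* G) h) := by
  rw [injective_iff_map_eq_one]
  intro x hx
  induction x using QuotientGroup.induction_on with | H g => ?_
  rw [QuotientGroup.eq_one_iff, hstab]
  change (φ ^ k * φ) g = 1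
  exact (QuotientGroup.eq_one_iff _).1 hx

theorem quotient_embeds_in_mappingTorus (m : ℕ) (φ : Monoid.End (FreeGroup (Fin m))) (k : ℕ)
    (hstab : MonoidHom.ker (φ ^ k) = MonoidHom.ker (φ ^ (k + 1)))
    (hinv : ∀ g ∈ MonoidHom.ker (φ ^ k), (φ : FreeGroup (Fin m) →* FreeGroup (Fin m)) g ∈ MonoidHom.ker (φ ^ k)) :
    Function.Injective
        (QuotientGroup.map (MonoidHom.ker (φ ^ k)) (MonoidHom.ker (φ ^ k))
          (φ : FreeGroup (Fin m) →* FreeGroup (Fin m)) (fun g hg => hinv g hg)) ∧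
      ∃ f : @MonoidHom (FreeGroup (Fin m) ⧸ MonoidHom.ker (φ ^ k))
          (mappingTorus (φ : FreeGroup (Fin m) →* FreeGroup (Fin m))) _ (instGroupMappingTorus _).toMulOne,
        Function.Injective f := by
  have hinj := Monoid.End.injective_map_ker_pow hstab hinv
  -- the group instance on `mappingTorus` is found only when the map is typed as `G →* G`
  let ψ : FreeGroup (Fin m) →* FreeGroup (Fin m) := φ
  have hker : MonoidHom.ker (φ ^ k) ≤ (mappingTorus.ofBase ψ).ker := fun g hg =>
    mappingTorus.ofBase_eq_one_of_iterate_eq_one ψ (n := k) hg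
  refine ⟨hinj, (QuotientGroup.lift _ (mappingTorus.ofBase ψ) hker : _ →* mappingTorus ψ), ?_⟩
  exact (QuotientGroup.injective_lift_iff (M := mappingTorus ψ) _ _ _).2
    (le_antisymm hker (mappingTorus.ker_ofBase_le ψ hinv hinj))
end
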